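/- For every n×n real matrix A, the maximum of Tr(A Xᵀ) over all orthogonal matrices X ∈ O(n) equals the sum of the singular values of A, i.e., max_{X Xᵀ = I} Tr(A Xᵀ) = Σ_{i=1}^{n} σ_i(A); moreover, if A = U S Vᵀ is a singular value decomposition of A, the maximum is attained at X = U Vᵀ, the orthogonal part of the polar decomposition of A. -/

import Mathlib

open Matrix

variable {n : ℕ}


lemma conjT_eq (M : Matrix (Fin n) (Fin n) ℝ) : Mᴴ = Mᵀ := by
  ext i j; simp [conjTranspose_apply]

lemma star_eq (M : Matrix (Fin n) (Fin n) ℝ) : star M = Mᵀ := by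
  rw [Matrix.star_eq_conjTranspose, conjT_eq]

lemma memO_iff {X : Matrix (Fin n) (Fin n) ℝ} :
    X ∈ Matrix.orthogonalGroup (Fin n) ℝ ↔ X * Xᵀ = 1 := by
  rw [Matrix.mem_orthogonalGroup_iff]

lemma entry_le_one {X : Matrix (Fin n) (Fin n) ℝ} (h : X * Xᵀ = 1) (i : Fin n) :
    X i i ≤ 1 := by
  have h1 : ∑ j, X i j * X i j = 1 := by
    have := congrFun (congrFun h i) i
    simpa [mul_apply, Matrix.one_apply] using this
  have h2 : X i i * X i i ≤ 1 := by
    rw [← h1]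
    exact Finset.single_le_sum (f := fun j => X i j * X i j) (fun j _ => mul_self_nonneg _) (Finset.mem_univ i)
  nlinarith



open scoped MatrixOrder in
lemma trace_sqrt (A : Matrix (Fin n) (Fin n) ℝ) (hA : (Aᵀ * A).IsHermitian)
    (hM : Matrix.PosSemidef (Aᵀ * A)) :
    (CFC.sqrt (Aᵀ * A)).trace = ∑ i, Real.sqrt (hA.eigenvalues i) := by
  rw [CFC.sqrt_eq_real_sqrt (Aᵀ * A) (Matrix.nonneg_iff_posSemidef.mpr hM), cfcₙ_eq_cfc,
    hA.cfc_eq, IsHermitian.cfc, Unitary.conjStarAlgAut_apply, Matrix.trace_mul_cycle,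
    Unitary.coe_star_mul_self, one_mul, Matrix.trace_diagonal]
  show ∑ i, (RCLike.ofReal ∘ Real.sqrt ∘ hA.eigenvalues) i = _
  simp

open scoped MatrixOrder in
lemma trace_S (A U S V : Matrix (Fin n) (Fin n) ℝ) (hA : (Aᵀ * A).IsHermitian)
    (hU : U * Uᵀ = 1) (hV : V * Vᵀ = 1)
    (hSo : ∀ i j, i ≠ j → S i j = 0) (hSd : ∀ i, 0 ≤ S i i) (hsvd : A = U * S * Vᵀ) :
    S.trace = ∑ i, Real.sqrt (hA.eigenvalues i) := by
  have hSdiag : S = diagonal (fun i => S i i) := by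
    ext i j
    rcases eq_or_ne i j with h | h
    · subst h; simp
    · rw [diagonal_apply_ne _ h, hSo i j h]
  have hST : Sᵀ = S := by rw [hSdiag]; exact diagonal_transpose _
  have hSpsd : Matrix.PosSemidef S := by
    rw [hSdiag]; exact Matrix.posSemidef_diagonal_iff.mpr hSd
  have hM : Matrix.PosSemidef (Aᵀ * A) := by
    have := Matrix.posSemidef_conjTranspose_mul_self A
    rwa [conjT_eq] at this
  have hVV : Vᵀ * V = 1 := mul_eq_one_comm.mp hV
  have hUU : Uᵀ * U = 1 := mul_eq_one_comm.mp hU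
  have hB : Matrix.PosSemidef (V * S * Vᵀ) := by
    have := hSpsd.mul_mul_conjTranspose_same V
    rwa [conjT_eq] at this
  have hsq : (V * S * Vᵀ) ^ 2 = Aᵀ * A := by
    rw [pow_two, hsvd, transpose_mul, transpose_mul, transpose_transpose, hST]
    simp only [Matrix.mul_assoc]
    have e1 : Vᵀ * (V * (S * Vᵀ)) = S * Vᵀ := by
      rw [← Matrix.mul_assoc, hVV, Matrix.one_mul]
    have e2 : Uᵀ * (U * (S * Vᵀ)) = S * Vᵀ := by
      rw [← Matrix.mul_assoc, hUU, Matrix.one_mul]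
    rw [e1, e2]
  have hBsqrt : V * S * Vᵀ = CFC.sqrt (Aᵀ * A) :=
    ((CFC.sqrt_eq_iff _ _ (Matrix.nonneg_iff_posSemidef.mpr hM)
      (Matrix.nonneg_iff_posSemidef.mpr hB)).mpr (by rw [← pow_two]; exact hsq)).symm
  calc S.trace = (V * S * Vᵀ).trace := by
        rw [Matrix.trace_mul_cycle, hVV, Matrix.one_mul]
    _ = (CFC.sqrt (Aᵀ * A)).trace := by rw [hBsqrt]
    _ = ∑ i, Real.sqrt (hA.eigenvalues i) := trace_sqrt A hA hM


lemma attain (A U S V : Matrix (Fin n) (Fin n) ℝ)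
    (hU : U * Uᵀ = 1) (hV : V * Vᵀ = 1) (hsvd : A = U * S * Vᵀ) :
    (A * (U * Vᵀ)ᵀ).trace = S.trace := by
  have hVV : Vᵀ * V = 1 := mul_eq_one_comm.mp hV
  have hUU : Uᵀ * U = 1 := mul_eq_one_comm.mp hU
  rw [hsvd, transpose_mul, transpose_transpose]
  calc (U * S * Vᵀ * (V * Uᵀ)).trace
      = (U * S * (Vᵀ * V) * Uᵀ).trace := by simp only [Matrix.mul_assoc]
    _ = (U * S * Uᵀ).trace := by rw [hVV, Matrix.mul_one]
    _ = S.trace := by rw [Matrix.trace_mul_cycle, hUU, Matrix.one_mul]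


lemma upper_bound (A U S V X : Matrix (Fin n) (Fin n) ℝ)
    (hU : U * Uᵀ = 1) (hV : V * Vᵀ = 1) (hX : X * Xᵀ = 1)
    (hSo : ∀ i j, i ≠ j → S i j = 0) (hSd : ∀ i, 0 ≤ S i i) (hsvd : A = U * S * Vᵀ) :
    (A * Xᵀ).trace ≤ S.trace := by
  have hVV : Vᵀ * V = 1 := mul_eq_one_comm.mp hV
  have hUU : Uᵀ * U = 1 := mul_eq_one_comm.mp hU
  have hXX : Xᵀ * X = 1 := mul_eq_one_comm.mp hX
  set W : Matrix (Fin n) (Fin n) ℝ := Vᵀ * Xᵀ * U with hWdef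
  have hW : W * Wᵀ = 1 := by
    rw [hWdef, transpose_mul, transpose_mul, transpose_transpose, transpose_transpose]
    calc Vᵀ * Xᵀ * U * (Uᵀ * (X * V))
        = Vᵀ * (Xᵀ * ((U * Uᵀ) * (X * V))) := by simp only [Matrix.mul_assoc]
      _ = Vᵀ * (Xᵀ * X * V) := by rw [hU, Matrix.one_mul, Matrix.mul_assoc]
      _ = 1 := by rw [hXX, Matrix.one_mul, hVV]
  have htr : (A * Xᵀ).trace = (S * W).trace := by
    rw [hsvd, hWdef]
    calc (U * S * Vᵀ * Xᵀ).trace = (U * (S * (Vᵀ * Xᵀ))).trace := by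
          simp only [Matrix.mul_assoc]
      _ = (S * (Vᵀ * Xᵀ) * U).trace := by rw [Matrix.trace_mul_comm]
      _ = (S * (Vᵀ * Xᵀ * U)).trace := by simp only [Matrix.mul_assoc]
  rw [htr]
  have hdiag : (S * W).trace = ∑ i, S i i * W i i := by
    rw [Matrix.trace]
    refine Finset.sum_congr rfl fun i _ => ?_
    rw [Matrix.diag_apply, mul_apply]
    exact Finset.sum_eq_single i (fun j _ hj => by rw [hSo i j (Ne.symm hj), zero_mul])
      (fun h => absurd (Finset.mem_univ i) h)
  rw [hdiag, Matrix.trace]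
  refine Finset.sum_le_sum fun i _ => ?_
  calc S i i * W i i ≤ S i i * 1 :=
        mul_le_mul_of_nonneg_left (entry_le_one hW i) (hSd i)
    _ = S i i := mul_one _



lemma exists_svd (A : Matrix (Fin n) (Fin n) ℝ) (hA : (Aᵀ * A).IsHermitian) :
    ∃ U S V : Matrix (Fin n) (Fin n) ℝ, U * Uᵀ = 1 ∧ V * Vᵀ = 1 ∧
      (∀ i j, i ≠ j → S i j = 0) ∧ (∀ i, 0 ≤ S i i) ∧ A = U * S * Vᵀ := by
  have hM : Matrix.PosSemidef (Aᵀ * A) := by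
    have := Matrix.posSemidef_conjTranspose_mul_self A
    rwa [conjT_eq] at this
  set lam : Fin n → ℝ := hA.eigenvalues with hlam
  have hlam_nonneg : ∀ i, 0 ≤ lam i := fun i => hM.eigenvalues_nonneg i
  set V : Matrix (Fin n) (Fin n) ℝ := (hA.eigenvectorUnitary : Matrix (Fin n) (Fin n) ℝ)
    with hVdef
  have hVmem := hA.eigenvectorUnitary.2
  have hV : V * Vᵀ = 1 := by
    rw [← star_eq]; exact (Matrix.mem_unitaryGroup_iff).mp hVmem
  have hVV : Vᵀ * V = 1 := mul_eq_one_comm.mp hV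
  have hspec : Aᵀ * A = V * diagonal lam * Vᵀ := by
    have := hA.spectral_theorem
    rw [Unitary.conjStarAlgAut_apply, star_eq] at this
    have h2 : (RCLike.ofReal ∘ hA.eigenvalues : Fin n → ℝ) = lam := by
      funext i; simp [hlam]
    rw [h2] at this
    exact this
  set C : Matrix (Fin n) (Fin n) ℝ := A * V with hCdef
  have hC : Cᵀ * C = diagonal lam := by
    rw [hCdef, transpose_mul]
    calc Vᵀ * Aᵀ * (A * V) = Vᵀ * (Aᵀ * A) * V := by simp only [Matrix.mul_assoc]
      _ = Vᵀ * (V * diagonal lam * Vᵀ) * V := by rw [hspec]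
      _ = (Vᵀ * V) * diagonal lam * (Vᵀ * V) := by simp only [Matrix.mul_assoc]
      _ = diagonal lam := by rw [hVV, Matrix.one_mul, Matrix.mul_one]
  have key : ∀ i j, ∑ k, C k i * C k j = diagonal lam i j := by
    intro i j
    have := congrFun (congrFun hC i) j
    simpa [mul_apply, transpose_apply] using this
  -- columns as Euclidean vectors
  set c : Fin n → EuclideanSpace ℝ (Fin n) :=
    fun i => (WithLp.equiv 2 (Fin n → ℝ)).symm (fun k => C k i) with hcdef
  set v : Fin n → EuclideanSpace ℝ (Fin n) :=
    fun i => (Real.sqrt (lam i))⁻¹ • c i with hvdef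
  have hinner : ∀ i j, inner ℝ (c i) (c j) = diagonal lam i j := by
    intro i j
    rw [← key i j]
    simp [hcdef, PiLp.inner_apply, RCLike.inner_apply, WithLp.equiv_symm_apply, PiLp.toLp_apply]
    exact Finset.sum_congr rfl fun _ _ => mul_comm _ _
  have hortho : Orthonormal ℝ (Set.restrict {i | lam i ≠ 0} v) := by
    rw [orthonormal_iff_ite]
    rintro ⟨i, hi⟩ ⟨j, hj⟩
    show inner ℝ (v i) (v j) = _; rw [hvdef]
    simp only [inner_smul_left, inner_smul_right, RCLike.conj_to_real, hinner i j]
    rcases eq_or_ne i j with h | h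
    · subst h
      rw [diagonal_apply_eq]
      have hpos : 0 < lam i := lt_of_le_of_ne (hlam_nonneg i) (Ne.symm hi)
      rw [if_pos rfl]
      field_simp
      exact (Real.sq_sqrt hpos.le).symm
    · rw [diagonal_apply_ne _ h, if_neg (by simp [Subtype.ext_iff, h])]
      ring
  obtain ⟨b, hb⟩ := hortho.exists_orthonormalBasis_extension_of_card_eq
    (by simp)
  set U : Matrix (Fin n) (Fin n) ℝ := Matrix.of (fun j i => b i j) with hUdef
  have hUU : Uᵀ * U = 1 := by
    ext i j
    have := orthonormal_iff_ite.mp b.orthonormal i j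
    rw [mul_apply]
    simp only [hUdef, transpose_apply, Matrix.of_apply, Matrix.one_apply]
    rw [← this]
    simp [PiLp.inner_apply, RCLike.inner_apply]
    exact Finset.sum_congr rfl fun _ _ => mul_comm _ _
  have hU : U * Uᵀ = 1 := mul_eq_one_comm.mpr hUU
  have hCU : C = U * diagonal (fun i => Real.sqrt (lam i)) := by
    ext k i
    rw [Matrix.mul_diagonal]
    rcases eq_or_ne (lam i) 0 with h0 | h0
    · have hzero : C k i = 0 := by
        have hsum : ∑ k, C k i * C k i = 0 := by rw [key i i, diagonal_apply_eq, h0]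
        have := (Finset.sum_eq_zero_iff_of_nonneg
          (fun j _ => mul_self_nonneg (C j i))).mp hsum k (Finset.mem_univ k)
        exact mul_self_eq_zero.mp this
      rw [hzero]
      simp [hUdef, h0]
    · have hbi : b i = v i := hb i h0
      have hpos : 0 < lam i := lt_of_le_of_ne (hlam_nonneg i) (Ne.symm h0)
      have hsne : Real.sqrt (lam i) ≠ 0 := by positivity
      have : U k i = (Real.sqrt (lam i))⁻¹ * C k i := by
        simp only [hUdef, Matrix.of_apply, hbi, hvdef]
        simp [hcdef, PiLp.smul_apply, WithLp.equiv_symm_apply, PiLp.toLp_apply]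
      rw [this]
      field_simp
  refine ⟨U, diagonal (fun i => Real.sqrt (lam i)), V, hU, hV, ?_, ?_, ?_⟩
  · intro i j h; exact diagonal_apply_ne _ h
  · intro i; rw [diagonal_apply_eq]; positivity
  · calc A = A * (V * Vᵀ) := by rw [hV, Matrix.mul_one]
      _ = C * Vᵀ := by rw [hCdef, Matrix.mul_assoc]
      _ = U * diagonal (fun i => Real.sqrt (lam i)) * Vᵀ := by rw [hCU]

/-- For an `n × n` real matrix `A` (with singular values
`σ_i(A) = √(eigenvalues of Aᵀ A)`), the maximum of `Tr(A Xᵀ)` over orthogonal `X ∈ O(n)`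
equals the sum of the singular values of `A`; moreover, if `A = U S Vᵀ` is a singular value
decomposition of `A`, the maximum is attained at `X = U Vᵀ`, the orthogonal part of the
polar decomposition of `A`. -/
theorem trace_max_over_orthogonal (n : ℕ) (A : Matrix (Fin n) (Fin n) ℝ)
    (hA : (Aᵀ * A).IsHermitian) :
    IsGreatest {t : ℝ | ∃ X ∈ Matrix.orthogonalGroup (Fin n) ℝ, t = (A * Xᵀ).trace}
        (∑ i, Real.sqrt (hA.eigenvalues i)) ∧
      ∀ U S V : Matrix (Fin n) (Fin n) ℝ,
        U ∈ Matrix.orthogonalGroup (Fin n) ℝ → V ∈ Matrix.orthogonalGroup (Fin n) ℝ →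
        (∀ i j, i ≠ j → S i j = 0) → (∀ i, 0 ≤ S i i) → A = U * S * Vᵀ →
        (A * (U * Vᵀ)ᵀ).trace = ∑ i, Real.sqrt (hA.eigenvalues i) := by
  obtain ⟨U, S, V, hU, hV, hSo, hSd, hsvd⟩ := exists_svd A hA
  have hStr := trace_S A U S V hA hU hV hSo hSd hsvd
  constructor
  · constructor
    · refine ⟨U * Vᵀ, ?_, ?_⟩
      · rw [memO_iff, transpose_mul, transpose_transpose]
        calc U * Vᵀ * (V * Uᵀ) = U * (Vᵀ * V) * Uᵀ := by simp only [Matrix.mul_assoc]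
          _ = 1 := by rw [mul_eq_one_comm.mp hV, Matrix.mul_one, hU]
      · rw [attain A U S V hU hV hsvd, hStr]
    · rintro t ⟨X, hX, rfl⟩
      rw [← hStr]
      exact upper_bound A U S V X hU hV (memO_iff.mp hX) hSo hSd hsvd
  · intro U' S' V' hU' hV' ho hd hsvd'
    rw [attain A U' S' V' (memO_iff.mp hU') (memO_iff.mp hV') hsvd',
      trace_S A U' S' V' hA (memO_iff.mp hU') (memO_iff.mp hV') ho hd hsvd']
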